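/- Let ε = exp(2πi/8), and in SL(2,ℂ) let S = −(1/√2)·[[1, ε],[ε³, 1]] and U = [[0, 1],[−1, 0]]. Then the subgroup of SL(2,ℂ) generated by S and U (the binary octahedral group) has cardinality 48. -/

import Mathlib

open Complex Matrix

noncomputable def eps : ℂ := Complex.exp (2 * Real.pi * Complex.I / 8)
noncomputable def rt2 : ℂ := ((Real.sqrt 2 : ℝ) : ℂ)
lemma rt2_sq : rt2 ^ 2 = 2 := by
  rw [rt2]; norm_cast; exact Real.sq_sqrt (by norm_num)
lemma eps_eq : eps = (rt2 + rt2 * I) / 2 := by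
  have h1 : (2 * (Real.pi:ℂ) * Complex.I / 8) = ((Real.pi/4 : ℝ) : ℂ) * I := by
    push_cast; ring
  rw [eps, h1, Complex.exp_mul_I, ← Complex.ofReal_cos, ← Complex.ofReal_sin]
  rw [Real.cos_pi_div_four, Real.sin_pi_div_four, rt2]
  push_cast; ring
lemma eps_sq : eps ^ 2 = I := by
  rw [eps_eq]
  linear_combination (I/2) * rt2_sq + (rt2^2/4) * Complex.I_sq
lemma eps_cube : eps ^ 3 = (-rt2 + rt2 * I) / 2 := by
  rw [pow_succ, eps_sq, eps_eq]
  linear_combination (rt2/2) * Complex.I_sq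
lemma eps_pow4 : eps ^ 4 = -1 := by
  rw [show (4:ℕ) = 2*2 from rfl, pow_mul, eps_sq, Complex.I_sq]

lemma indep (a b c d : ℤ) (h : (a:ℂ) + b * eps + c * eps^2 + d * eps^3 = 0) :
    a = 0 ∧ b = 0 ∧ c = 0 ∧ d = 0 := by
  set t : ℝ := Real.sqrt 2 with ht
  rw [eps_sq, eps_cube, eps_eq] at h
  simp only [rt2] at h
  have h' : ((2*a + (b - d)*t : ℝ) : ℂ) + ((b + d)*t + 2*c : ℝ) * I = 0 := by
    push_cast
    linear_combination 2*h
  rw [Complex.ext_iff] at h'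
  simp only [Complex.add_re, Complex.ofReal_re, Complex.mul_re, Complex.I_re,
    Complex.I_im, Complex.ofReal_im, Complex.add_im, Complex.mul_im, Complex.zero_re,
    Complex.zero_im] at h'
  obtain ⟨e1, e2⟩ := h'
  have e1 : 2*(a:ℝ) + ((b:ℝ) - d)*t = 0 := by linarith
  have e2 : ((b:ℝ) + d)*t + 2*(c:ℝ) = 0 := by linarith
  have hirr := irrational_sqrt_two
  have hbd : b = d := by
    by_contra hne
    apply hirr
    refine ⟨(-2*a)/((b:ℚ) - d), ?_⟩
    have hbd' : ((b:ℝ) - d) ≠ 0 := by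
      intro h0
      apply hne
      exact_mod_cast sub_eq_zero.mp (by exact_mod_cast h0)
    push_cast
    rw [div_eq_iff hbd', ← ht]
    linarith
  have hbd2 : b = -d := by
    by_contra hne
    apply hirr
    refine ⟨(-2*c)/((b:ℚ) + d), ?_⟩
    have hbd' : ((b:ℝ) + d) ≠ 0 := by
      intro h0
      apply hne
      have : (b:ℝ) = -d := by linarith
      exact_mod_cast this
    push_cast
    rw [div_eq_iff hbd', ← ht]
    linarith
  have hb : b = 0 := by omega
  have hd : d = 0 := by omega
  subst hb hd
  simp only [Int.cast_zero, zero_sub, sub_zero, zero_mul, add_zero, zero_add, neg_zero] at e1 e2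
  have ha : (a:ℝ) = 0 := by linarith
  have hc : (c:ℝ) = 0 := by linarith
  exact ⟨by exact_mod_cast ha, rfl, by exact_mod_cast hc, rfl⟩

@[ext]
structure Pre where
  a : ℤ
  b : ℤ
  c : ℤ
  d : ℤ
  e : ℕ
deriving DecidableEq

def Pre.Norm (x : Pre) : Prop := x.e = 0 ∨ ¬(2 ∣ x.a ∧ 2 ∣ x.b ∧ 2 ∣ x.c ∧ 2 ∣ x.d)

instance : DecidablePred Pre.Norm := fun x => by unfold Pre.Norm; infer_instance

def normAux : ℤ → ℤ → ℤ → ℤ → ℕ → Pre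
  | a, b, c, d, 0 => ⟨a, b, c, d, 0⟩
  | a, b, c, d, e+1 =>
      if 2 ∣ a ∧ 2 ∣ b ∧ 2 ∣ c ∧ 2 ∣ d then normAux (a/2) (b/2) (c/2) (d/2) e
      else ⟨a, b, c, d, e+1⟩

lemma normAux_norm (a b c d : ℤ) (e : ℕ) : (normAux a b c d e).Norm := by
  induction e generalizing a b c d with
  | zero => exact Or.inl rfl
  | succ e ih =>
      rw [normAux]
      split
      · exact ih _ _ _ _
      · exact Or.inr (by assumption)

noncomputable def v (x : Pre) : ℂ :=
  ((x.a : ℂ) + x.b * eps + x.c * eps^2 + x.d * eps^3) / 2 ^ x.e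

lemma two_pow_ne (e : ℕ) : ((2:ℂ) ^ e) ≠ 0 := pow_ne_zero _ two_ne_zero

lemma v_normAux (a b c d : ℤ) (e : ℕ) : v (normAux a b c d e) = v ⟨a, b, c, d, e⟩ := by
  induction e generalizing a b c d with
  | zero => rfl
  | succ e ih =>
      rw [normAux]
      split
      · next h =>
          obtain ⟨⟨a', rfl⟩, ⟨b', rfl⟩, ⟨c', rfl⟩, ⟨d', rfl⟩⟩ := h
          rw [ih]
          simp only [v, Int.mul_ediv_cancel_left _ (by norm_num : (2:ℤ) ≠ 0)]
          push_cast
          rw [div_eq_div_iff (two_pow_ne e) (two_pow_ne (e+1))]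
          ring
      · rfl

def R8 : Type := {x : Pre // x.Norm}

instance : DecidableEq R8 := Subtype.instDecidableEq

def mk' (a b c d : ℤ) (e : ℕ) : R8 := ⟨normAux a b c d e, normAux_norm a b c d e⟩

noncomputable def φ (x : R8) : ℂ := v x.1

lemma φ_mk' (a b c d : ℤ) (e : ℕ) : φ (mk' a b c d e) = v ⟨a, b, c, d, e⟩ :=
  v_normAux a b c d e

lemma norm_unique (x y : Pre) (hx : x.Norm) (hy : y.Norm) (hle : x.e ≤ y.e)
    (ha : x.a * 2^y.e = y.a * 2^x.e) (hb : x.b * 2^y.e = y.b * 2^x.e)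
    (hc : x.c * 2^y.e = y.c * 2^x.e) (hd : x.d * 2^y.e = y.d * 2^x.e) : x = y := by
  obtain ⟨k, hk⟩ := Nat.exists_eq_add_of_le hle
  have hpow : (2:ℤ)^x.e ≠ 0 := pow_ne_zero _ (by norm_num)
  have cancel : ∀ u w : ℤ, u * 2^y.e = w * 2^x.e → w = u * 2^k := by
    intro u w h
    apply mul_right_cancel₀ hpow
    rw [← h, hk, pow_add]
    ring
  have ha' := cancel _ _ ha
  have hb' := cancel _ _ hb
  have hc' := cancel _ _ hc
  have hd' := cancel _ _ hd
  rcases Nat.eq_zero_or_pos k with hk0 | hkpos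
  · subst hk0
    simp only [pow_zero, mul_one] at ha' hb' hc' hd'
    ext
    · exact ha'.symm
    · exact hb'.symm
    · exact hc'.symm
    · exact hd'.symm
    · omega
  · exfalso
    have hye : y.e ≠ 0 := by omega
    rcases hy with h0 | hnd
    · exact hye h0
    apply hnd
    obtain ⟨k', rfl⟩ := Nat.exists_eq_add_of_le hkpos
    refine ⟨⟨x.a * 2^k', by rw [ha']; ring⟩, ⟨x.b * 2^k', by rw [hb']; ring⟩,
      ⟨x.c * 2^k', by rw [hc']; ring⟩, ⟨x.d * 2^k', by rw [hd']; ring⟩⟩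

lemma φ_inj : Function.Injective φ := by
  intro x y h
  have h' : ((x.1.a:ℂ) + x.1.b * eps + x.1.c * eps^2 + x.1.d * eps^3) * 2 ^ y.1.e
      = ((y.1.a:ℂ) + y.1.b * eps + y.1.c * eps^2 + y.1.d * eps^3) * 2 ^ x.1.e := by
    have := h
    unfold φ v at this
    rw [div_eq_div_iff (two_pow_ne _) (two_pow_ne _)] at this
    exact this
  have key := indep (x.1.a * 2^y.1.e - y.1.a * 2^x.1.e) (x.1.b * 2^y.1.e - y.1.b * 2^x.1.e)
    (x.1.c * 2^y.1.e - y.1.c * 2^x.1.e) (x.1.d * 2^y.1.e - y.1.d * 2^x.1.e)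
    (by push_cast; linear_combination h')
  obtain ⟨ka, kb, kc, kd⟩ := key
  have ha : x.1.a * 2^y.1.e = y.1.a * 2^x.1.e := by omega
  have hb : x.1.b * 2^y.1.e = y.1.b * 2^x.1.e := by omega
  have hc : x.1.c * 2^y.1.e = y.1.c * 2^x.1.e := by omega
  have hd : x.1.d * 2^y.1.e = y.1.d * 2^x.1.e := by omega
  apply Subtype.ext
  rcases le_total x.1.e y.1.e with hle | hle
  · exact norm_unique _ _ x.2 y.2 hle ha hb hc hd
  · exact (norm_unique _ _ y.2 x.2 hle ha.symm hb.symm hc.symm hd.symm).symm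

instance : Zero R8 := ⟨⟨⟨0,0,0,0,0⟩, Or.inl rfl⟩⟩
instance : One R8 := ⟨⟨⟨1,0,0,0,0⟩, Or.inl rfl⟩⟩
instance : NatCast R8 := ⟨fun n => ⟨⟨n,0,0,0,0⟩, Or.inl rfl⟩⟩
instance : IntCast R8 := ⟨fun n => ⟨⟨n,0,0,0,0⟩, Or.inl rfl⟩⟩
instance : Neg R8 := ⟨fun x => mk' (-x.1.a) (-x.1.b) (-x.1.c) (-x.1.d) x.1.e⟩
instance : Add R8 := ⟨fun x y =>
  mk' (x.1.a * 2^y.1.e + y.1.a * 2^x.1.e) (x.1.b * 2^y.1.e + y.1.b * 2^x.1.e)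
      (x.1.c * 2^y.1.e + y.1.c * 2^x.1.e) (x.1.d * 2^y.1.e + y.1.d * 2^x.1.e)
      (x.1.e + y.1.e)⟩
instance : Mul R8 := ⟨fun x y =>
  mk' (x.1.a*y.1.a - x.1.b*y.1.d - x.1.c*y.1.c - x.1.d*y.1.b)
      (x.1.a*y.1.b + x.1.b*y.1.a - x.1.c*y.1.d - x.1.d*y.1.c)
      (x.1.a*y.1.c + x.1.b*y.1.b + x.1.c*y.1.a - x.1.d*y.1.d)
      (x.1.a*y.1.d + x.1.b*y.1.c + x.1.c*y.1.b + x.1.d*y.1.a)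
      (x.1.e + y.1.e)⟩
instance : Sub R8 := ⟨fun x y => x + -y⟩
instance : SMul ℕ R8 := ⟨fun n x => mk' (n*x.1.a) (n*x.1.b) (n*x.1.c) (n*x.1.d) x.1.e⟩
instance : SMul ℤ R8 := ⟨fun n x => mk' (n*x.1.a) (n*x.1.b) (n*x.1.c) (n*x.1.d) x.1.e⟩
instance : Pow R8 ℕ := ⟨fun x n => npowRec n x⟩

lemma φ_zero : φ (0 : R8) = 0 := by
  show v ⟨0,0,0,0,0⟩ = 0
  simp [v]
lemma φ_one : φ (1 : R8) = 1 := by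
  show v ⟨1,0,0,0,0⟩ = 1
  simp [v]
lemma φ_natCast (n : ℕ) : φ (n : R8) = n := by
  show v ⟨n,0,0,0,0⟩ = _
  simp [v]
lemma φ_intCast (n : ℤ) : φ (n : R8) = n := by
  show v ⟨n,0,0,0,0⟩ = _
  simp [v]
lemma φ_add (x y : R8) : φ (x + y) = φ x + φ y := by
  show φ (mk' _ _ _ _ _) = _
  rw [φ_mk']
  unfold φ v
  push_cast
  rw [div_add_div _ _ (two_pow_ne _) (two_pow_ne _),
    div_eq_div_iff (two_pow_ne _) (mul_ne_zero (two_pow_ne _) (two_pow_ne _))]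
  rw [pow_add]
  ring
lemma φ_neg (x : R8) : φ (-x) = - φ x := by
  show φ (mk' _ _ _ _ _) = _
  rw [φ_mk']
  unfold φ v
  push_cast
  ring
lemma φ_mul (x y : R8) : φ (x * y) = φ x * φ y := by
  show φ (mk' _ _ _ _ _) = _
  rw [φ_mk']
  unfold φ v
  rw [div_mul_div_comm, ← pow_add]
  congr 1
  push_cast
  linear_combination (-((x.1.b*y.1.d + x.1.c*y.1.c + x.1.d*y.1.b : ℂ)
    + (x.1.c*y.1.d + x.1.d*y.1.c) * eps + (x.1.d*y.1.d) * eps^2)) * eps_pow4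
lemma φ_sub (x y : R8) : φ (x - y) = φ x - φ y := by
  show φ (x + -y) = _
  rw [φ_add, φ_neg]
  ring
lemma φ_nsmul (n : ℕ) (x : R8) : φ (n • x) = n • φ x := by
  show φ (mk' _ _ _ _ _) = _
  rw [φ_mk']
  unfold φ v
  push_cast
  rw [nsmul_eq_mul]
  push_cast
  ring
lemma φ_zsmul (n : ℤ) (x : R8) : φ (n • x) = n • φ x := by
  show φ (mk' _ _ _ _ _) = _
  rw [φ_mk']
  unfold φ v
  rw [zsmul_eq_mul]
  push_cast
  ring
lemma φ_npow (x : R8) (n : ℕ) : φ (x ^ n) = φ x ^ n := by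
  induction n with
  | zero => show φ (npowRec 0 x) = _; simpa [npowRec] using φ_one
  | succ n ih =>
      show φ (npowRec (n+1) x) = _
      rw [npowRec, pow_succ, ← ih, φ_mul]
      rfl

noncomputable instance : CommRing R8 :=
  φ_inj.commRing φ φ_zero φ_one φ_add φ_mul φ_neg φ_sub φ_nsmul φ_zsmul φ_npow φ_natCast φ_intCast

noncomputable def φR : R8 →+* ℂ where
  toFun := φ
  map_one' := φ_one
  map_mul' := φ_mul
  map_zero' := φ_zero
  map_add' := φ_add

abbrev G8 := Matrix.SpecialLinearGroup (Fin 2) R8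

instance : DecidableEq G8 := fun x y => decidable_of_iff (x.1 = y.1) Subtype.ext_iff.symm

def S' : G8 :=
  ⟨!![mk' 0 (-1) 0 1 1, mk' (-1) 0 (-1) 0 1; mk' 1 0 (-1) 0 1, mk' 0 (-1) 0 1 1], by decide⟩

def U' : G8 := ⟨!![(0 : R8), 1; -1, 0], by decide⟩

@[ext]
structure M2 where
  a : R8
  b : R8
  c : R8
  d : R8
deriving DecidableEq

noncomputable def m2mul (x y : M2) : M2 :=
  ⟨x.a*y.a + x.b*y.c, x.a*y.b + x.b*y.d, x.c*y.a + x.d*y.c, x.c*y.b + x.d*y.d⟩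

noncomputable def oneQ : M2 := ⟨1, 0, 0, 1⟩

noncomputable def toM2 (g : G8) : M2 := ⟨g.1 0 0, g.1 0 1, g.1 1 0, g.1 1 1⟩

lemma toM2_one : toM2 1 = oneQ := by
  simp [toM2, oneQ, Matrix.SpecialLinearGroup.coe_one, Matrix.one_apply]

lemma toM2_mul (x y : G8) : toM2 (x * y) = m2mul (toM2 x) (toM2 y) := by
  ext <;>
    simp [toM2, m2mul, Matrix.SpecialLinearGroup.coe_mul, Matrix.mul_apply, Fin.sum_univ_two]

lemma toM2_inj : Function.Injective toM2 := by
  intro x y h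
  rw [M2.mk.injEq] at h
  obtain ⟨h1, h2, h3, h4⟩ := h
  apply Subtype.ext
  ext i j
  fin_cases i <;> fin_cases j <;> assumption

lemma m2mul_oneQ (x : M2) : m2mul x oneQ = x := by
  ext <;> simp [m2mul, oneQ]

lemma oneQ_m2mul (x : M2) : m2mul oneQ x = x := by
  ext <;> simp [m2mul, oneQ]

lemma m2mul_left_inv (g : G8) (x : M2) : m2mul (toM2 g⁻¹) (m2mul (toM2 g) x) = x := by
  have h : ∀ (u v : G8) (x : M2), m2mul (toM2 u) (m2mul (toM2 v) x) = m2mul (toM2 (u*v)) x := by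
    intro u v x
    rw [toM2_mul]
    ext <;> simp [m2mul] <;> ring
  rw [h, inv_mul_cancel, toM2_one, oneQ_m2mul]

lemma m2mul_toM2_inj (g : G8) : Function.Injective (m2mul (toM2 g) ·) := by
  intro x y h
  have := congrArg (m2mul (toM2 g⁻¹) ·) h
  simpa [m2mul_left_inv] using this

noncomputable def allQ : List M2 :=
  [⟨mk' 1 0 0 0 0, mk' 0 0 0 0 0, mk' 0 0 0 0 0, mk' 1 0 0 0 0⟩,
   ⟨mk' 0 (-1) 0 1 1, mk' (-1) 0 (-1) 0 1, mk' 1 0 (-1) 0 1, mk' 0 (-1) 0 1 1⟩,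
   ⟨mk' 0 0 0 0 0, mk' 1 0 0 0 0, mk' (-1) 0 0 0 0, mk' 0 0 0 0 0⟩,
   ⟨mk' 0 0 0 0 0, mk' 0 1 0 0 0, mk' 0 0 0 1 0, mk' 0 0 0 0 0⟩,
   ⟨mk' 1 0 (-1) 0 1, mk' 0 (-1) 0 1 1, mk' 0 1 0 (-1) 1, mk' 1 0 1 0 1⟩,
   ⟨mk' 1 0 1 0 1, mk' 0 (-1) 0 1 1, mk' 0 1 0 (-1) 1, mk' 1 0 (-1) 0 1⟩,
   ⟨mk' (-1) 0 0 0 0, mk' 0 0 0 0 0, mk' 0 0 0 0 0, mk' (-1) 0 0 0 0⟩,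
   ⟨mk' 0 1 0 (-1) 1, mk' (-1) 0 (-1) 0 1, mk' 1 0 (-1) 0 1, mk' 0 1 0 (-1) 1⟩,
   ⟨mk' 0 0 0 1 0, mk' 0 0 0 0 0, mk' 0 0 0 0 0, mk' 0 (-1) 0 0 0⟩,
   ⟨mk' 0 (-1) 0 1 1, mk' 1 0 (-1) 0 1, mk' (-1) 0 (-1) 0 1, mk' 0 (-1) 0 1 1⟩,
   ⟨mk' 0 1 0 (-1) 1, mk' 1 0 1 0 1, mk' (-1) 0 1 0 1, mk' 0 1 0 (-1) 1⟩,
   ⟨mk' 0 (-1) 0 0 0, mk' 0 0 0 0 0, mk' 0 0 0 0 0, mk' 0 0 0 1 0⟩,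
   ⟨mk' 0 1 0 (-1) 1, mk' 1 0 (-1) 0 1, mk' (-1) 0 (-1) 0 1, mk' 0 1 0 (-1) 1⟩,
   ⟨mk' 0 0 0 0 0, mk' (-1) 0 0 0 0, mk' 1 0 0 0 0, mk' 0 0 0 0 0⟩,
   ⟨mk' 1 0 (-1) 0 1, mk' 0 1 0 (-1) 1, mk' 0 (-1) 0 1 1, mk' 1 0 1 0 1⟩,
   ⟨mk' 1 0 (-1) 0 1, mk' 0 1 0 1 1, mk' 0 1 0 1 1, mk' 1 0 1 0 1⟩,
   ⟨mk' 0 0 0 0 0, mk' 0 (-1) 0 0 0, mk' 0 0 0 (-1) 0, mk' 0 0 0 0 0⟩,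
   ⟨mk' 1 0 1 0 1, mk' 0 1 0 1 1, mk' 0 1 0 1 1, mk' 1 0 (-1) 0 1⟩,
   ⟨mk' (-1) 0 (-1) 0 1, mk' 0 (-1) 0 1 1, mk' 0 1 0 (-1) 1, mk' (-1) 0 1 0 1⟩,
   ⟨mk' (-1) 0 1 0 1, mk' 0 1 0 (-1) 1, mk' 0 (-1) 0 1 1, mk' (-1) 0 (-1) 0 1⟩,
   ⟨mk' 1 0 1 0 1, mk' 0 1 0 (-1) 1, mk' 0 (-1) 0 1 1, mk' 1 0 (-1) 0 1⟩,
   ⟨mk' 0 0 0 0 0, mk' 0 0 0 1 0, mk' 0 1 0 0 0, mk' 0 0 0 0 0⟩,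
   ⟨mk' (-1) 0 1 0 1, mk' 0 (-1) 0 1 1, mk' 0 1 0 (-1) 1, mk' (-1) 0 (-1) 0 1⟩,
   ⟨mk' (-1) 0 (-1) 0 1, mk' 0 1 0 (-1) 1, mk' 0 (-1) 0 1 1, mk' (-1) 0 1 0 1⟩,
   ⟨mk' 0 1 0 1 1, mk' (-1) 0 (-1) 0 1, mk' 1 0 (-1) 0 1, mk' 0 (-1) 0 (-1) 1⟩,
   ⟨mk' 0 (-1) 0 1 1, mk' 1 0 1 0 1, mk' (-1) 0 1 0 1, mk' 0 (-1) 0 1 1⟩,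
   ⟨mk' 0 0 0 0 0, mk' 0 0 (-1) 0 0, mk' 0 0 (-1) 0 0, mk' 0 0 0 0 0⟩,
   ⟨mk' 0 1 0 1 1, mk' 1 0 1 0 1, mk' (-1) 0 1 0 1, mk' 0 (-1) 0 (-1) 1⟩,
   ⟨mk' 0 0 0 (-1) 0, mk' 0 0 0 0 0, mk' 0 0 0 0 0, mk' 0 1 0 0 0⟩,
   ⟨mk' 0 (-1) 0 (-1) 1, mk' (-1) 0 (-1) 0 1, mk' 1 0 (-1) 0 1, mk' 0 1 0 1 1⟩,
   ⟨mk' 0 1 0 1 1, mk' 1 0 (-1) 0 1, mk' (-1) 0 (-1) 0 1, mk' 0 (-1) 0 (-1) 1⟩,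
   ⟨mk' 0 1 0 (-1) 1, mk' (-1) 0 1 0 1, mk' 1 0 1 0 1, mk' 0 1 0 (-1) 1⟩,
   ⟨mk' 0 (-1) 0 (-1) 1, mk' 1 0 (-1) 0 1, mk' (-1) 0 (-1) 0 1, mk' 0 1 0 1 1⟩,
   ⟨mk' 0 1 0 0 0, mk' 0 0 0 0 0, mk' 0 0 0 0 0, mk' 0 0 0 (-1) 0⟩,
   ⟨mk' 0 (-1) 0 (-1) 1, mk' 1 0 1 0 1, mk' (-1) 0 1 0 1, mk' 0 1 0 1 1⟩,
   ⟨mk' 0 (-1) 0 1 1, mk' (-1) 0 1 0 1, mk' 1 0 1 0 1, mk' 0 (-1) 0 1 1⟩,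
   ⟨mk' (-1) 0 (-1) 0 1, mk' 0 1 0 1 1, mk' 0 1 0 1 1, mk' (-1) 0 1 0 1⟩,
   ⟨mk' 1 0 (-1) 0 1, mk' 0 (-1) 0 (-1) 1, mk' 0 (-1) 0 (-1) 1, mk' 1 0 1 0 1⟩,
   ⟨mk' (-1) 0 1 0 1, mk' 0 1 0 1 1, mk' 0 1 0 1 1, mk' (-1) 0 (-1) 0 1⟩,
   ⟨mk' 0 0 (-1) 0 0, mk' 0 0 0 0 0, mk' 0 0 0 0 0, mk' 0 0 1 0 0⟩,
   ⟨mk' (-1) 0 1 0 1, mk' 0 (-1) 0 (-1) 1, mk' 0 (-1) 0 (-1) 1, mk' (-1) 0 (-1) 0 1⟩,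
   ⟨mk' (-1) 0 (-1) 0 1, mk' 0 (-1) 0 (-1) 1, mk' 0 (-1) 0 (-1) 1, mk' (-1) 0 1 0 1⟩,
   ⟨mk' 0 0 1 0 0, mk' 0 0 0 0 0, mk' 0 0 0 0 0, mk' 0 0 (-1) 0 0⟩,
   ⟨mk' 0 0 0 0 0, mk' 0 0 0 (-1) 0, mk' 0 (-1) 0 0 0, mk' 0 0 0 0 0⟩,
   ⟨mk' 1 0 1 0 1, mk' 0 (-1) 0 (-1) 1, mk' 0 (-1) 0 (-1) 1, mk' 1 0 (-1) 0 1⟩,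
   ⟨mk' 0 1 0 1 1, mk' (-1) 0 1 0 1, mk' 1 0 1 0 1, mk' 0 (-1) 0 (-1) 1⟩,
   ⟨mk' 0 0 0 0 0, mk' 0 0 1 0 0, mk' 0 0 1 0 0, mk' 0 0 0 0 0⟩,
   ⟨mk' 0 (-1) 0 (-1) 1, mk' (-1) 0 1 0 1, mk' 1 0 1 0 1, mk' 0 1 0 1 1⟩]

set_option maxRecDepth 100000 in
lemma allQ_nodup : allQ.Nodup := by decide

set_option maxRecDepth 100000 in
lemma oneQ_mem : oneQ ∈ allQ := by decide

set_option maxRecDepth 100000 in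
lemma Sclosed : ∀ x ∈ allQ, m2mul (toM2 S') x ∈ allQ := by decide

set_option maxRecDepth 100000 in
lemma Uclosed : ∀ x ∈ allQ, m2mul (toM2 U') x ∈ allQ := by decide

noncomputable def LF : Finset M2 := ⟨(allQ : Multiset M2), Multiset.coe_nodup.mpr allQ_nodup⟩

lemma mem_LF (x : M2) : x ∈ LF ↔ x ∈ allQ := by
  simp [LF]

lemma LF_card : LF.card = 48 := by
  show (allQ : Multiset M2).card = 48
  simp [allQ]

noncomputable def K8 : Subgroup G8 where
  carrier := {g : G8 | ∀ x ∈ allQ, m2mul (toM2 g) x ∈ allQ}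
  one_mem' := by
    intro x hx
    rwa [toM2_one, oneQ_m2mul]
  mul_mem' := by
    intro g h hg hh x hx
    have h1 : m2mul (toM2 (g*h)) x = m2mul (toM2 g) (m2mul (toM2 h) x) := by
      rw [toM2_mul]
      ext <;> simp [m2mul] <;> ring
    rw [h1]
    exact hg _ (hh _ hx)
  inv_mem' := by
    intro g hg x hx
    have himg : LF.image (m2mul (toM2 g) ·) = LF := by
      apply Finset.eq_of_subset_of_card_le
      · intro y hy
        obtain ⟨z, hz, rfl⟩ := Finset.mem_image.mp hy
        exact (mem_LF _).mpr (hg _ ((mem_LF _).mp hz))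
      · rw [Finset.card_image_of_injective _ (m2mul_toM2_inj g)]
    have hx' : x ∈ LF.image (m2mul (toM2 g) ·) := by
      rw [himg]
      exact (mem_LF _).mpr hx
    obtain ⟨y, hy, hxy⟩ := Finset.mem_image.mp hx'
    rw [← hxy, m2mul_left_inv]
    exact (mem_LF _).mp hy

noncomputable def Hc : Subgroup G8 := Subgroup.closure {S', U'}

lemma hSmem : S' ∈ Hc := Subgroup.subset_closure (by simp)
lemma hUmem : U' ∈ Hc := Subgroup.subset_closure (by simp)

lemma Hc_le_K : Hc ≤ K8 := by
  apply (Subgroup.closure_le _).mpr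
  intro g hg
  rcases hg with rfl | rfl
  · exact Sclosed
  · exact Uclosed

lemma toM2_mem_allQ {g : G8} (hg : g ∈ Hc) : toM2 g ∈ allQ := by
  have := Hc_le_K hg _ oneQ_mem
  rwa [m2mul_oneQ] at this

set_option maxRecDepth 100000 in
lemma allQ_reachable : ∀ x ∈ allQ, ∃ g ∈ Hc, toM2 g = x := by
  have r0 : ∃ g ∈ Hc, toM2 g = (⟨mk' 1 0 0 0 0, mk' 0 0 0 0 0, mk' 0 0 0 0 0, mk' 1 0 0 0 0⟩ : M2) := ⟨1, one_mem _, by rw [toM2_one]; decide⟩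
  have r1 : ∃ g ∈ Hc, toM2 g = (⟨mk' 0 (-1) 0 1 1, mk' (-1) 0 (-1) 0 1, mk' 1 0 (-1) 0 1, mk' 0 (-1) 0 1 1⟩ : M2) := by
    obtain ⟨g, hg, hq⟩ := r0
    exact ⟨S' * g, mul_mem hSmem hg, by rw [toM2_mul, hq]; decide⟩
  have r2 : ∃ g ∈ Hc, toM2 g = (⟨mk' 0 0 0 0 0, mk' 1 0 0 0 0, mk' (-1) 0 0 0 0, mk' 0 0 0 0 0⟩ : M2) := by
    obtain ⟨g, hg, hq⟩ := r0
    exact ⟨U' * g, mul_mem hUmem hg, by rw [toM2_mul, hq]; decide⟩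
  have r3 : ∃ g ∈ Hc, toM2 g = (⟨mk' 0 0 0 0 0, mk' 0 1 0 0 0, mk' 0 0 0 1 0, mk' 0 0 0 0 0⟩ : M2) := by
    obtain ⟨g, hg, hq⟩ := r1
    exact ⟨S' * g, mul_mem hSmem hg, by rw [toM2_mul, hq]; decide⟩
  have r4 : ∃ g ∈ Hc, toM2 g = (⟨mk' 1 0 (-1) 0 1, mk' 0 (-1) 0 1 1, mk' 0 1 0 (-1) 1, mk' 1 0 1 0 1⟩ : M2) := by
    obtain ⟨g, hg, hq⟩ := r1
    exact ⟨U' * g, mul_mem hUmem hg, by rw [toM2_mul, hq]; decide⟩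
  have r5 : ∃ g ∈ Hc, toM2 g = (⟨mk' 1 0 1 0 1, mk' 0 (-1) 0 1 1, mk' 0 1 0 (-1) 1, mk' 1 0 (-1) 0 1⟩ : M2) := by
    obtain ⟨g, hg, hq⟩ := r2
    exact ⟨S' * g, mul_mem hSmem hg, by rw [toM2_mul, hq]; decide⟩
  have r6 : ∃ g ∈ Hc, toM2 g = (⟨mk' (-1) 0 0 0 0, mk' 0 0 0 0 0, mk' 0 0 0 0 0, mk' (-1) 0 0 0 0⟩ : M2) := by
    obtain ⟨g, hg, hq⟩ := r2
    exact ⟨U' * g, mul_mem hUmem hg, by rw [toM2_mul, hq]; decide⟩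
  have r7 : ∃ g ∈ Hc, toM2 g = (⟨mk' 0 1 0 (-1) 1, mk' (-1) 0 (-1) 0 1, mk' 1 0 (-1) 0 1, mk' 0 1 0 (-1) 1⟩ : M2) := by
    obtain ⟨g, hg, hq⟩ := r3
    exact ⟨S' * g, mul_mem hSmem hg, by rw [toM2_mul, hq]; decide⟩
  have r8 : ∃ g ∈ Hc, toM2 g = (⟨mk' 0 0 0 1 0, mk' 0 0 0 0 0, mk' 0 0 0 0 0, mk' 0 (-1) 0 0 0⟩ : M2) := by
    obtain ⟨g, hg, hq⟩ := r3
    exact ⟨U' * g, mul_mem hUmem hg, by rw [toM2_mul, hq]; decide⟩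
  have r9 : ∃ g ∈ Hc, toM2 g = (⟨mk' 0 (-1) 0 1 1, mk' 1 0 (-1) 0 1, mk' (-1) 0 (-1) 0 1, mk' 0 (-1) 0 1 1⟩ : M2) := by
    obtain ⟨g, hg, hq⟩ := r4
    exact ⟨S' * g, mul_mem hSmem hg, by rw [toM2_mul, hq]; decide⟩
  have r10 : ∃ g ∈ Hc, toM2 g = (⟨mk' 0 1 0 (-1) 1, mk' 1 0 1 0 1, mk' (-1) 0 1 0 1, mk' 0 1 0 (-1) 1⟩ : M2) := by
    obtain ⟨g, hg, hq⟩ := r4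
    exact ⟨U' * g, mul_mem hUmem hg, by rw [toM2_mul, hq]; decide⟩
  have r11 : ∃ g ∈ Hc, toM2 g = (⟨mk' 0 (-1) 0 0 0, mk' 0 0 0 0 0, mk' 0 0 0 0 0, mk' 0 0 0 1 0⟩ : M2) := by
    obtain ⟨g, hg, hq⟩ := r5
    exact ⟨S' * g, mul_mem hSmem hg, by rw [toM2_mul, hq]; decide⟩
  have r12 : ∃ g ∈ Hc, toM2 g = (⟨mk' 0 1 0 (-1) 1, mk' 1 0 (-1) 0 1, mk' (-1) 0 (-1) 0 1, mk' 0 1 0 (-1) 1⟩ : M2) := by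
    obtain ⟨g, hg, hq⟩ := r5
    exact ⟨U' * g, mul_mem hUmem hg, by rw [toM2_mul, hq]; decide⟩
  have r13 : ∃ g ∈ Hc, toM2 g = (⟨mk' 0 0 0 0 0, mk' (-1) 0 0 0 0, mk' 1 0 0 0 0, mk' 0 0 0 0 0⟩ : M2) := by
    obtain ⟨g, hg, hq⟩ := r6
    exact ⟨U' * g, mul_mem hUmem hg, by rw [toM2_mul, hq]; decide⟩
  have r14 : ∃ g ∈ Hc, toM2 g = (⟨mk' 1 0 (-1) 0 1, mk' 0 1 0 (-1) 1, mk' 0 (-1) 0 1 1, mk' 1 0 1 0 1⟩ : M2) := by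
    obtain ⟨g, hg, hq⟩ := r7
    exact ⟨U' * g, mul_mem hUmem hg, by rw [toM2_mul, hq]; decide⟩
  have r15 : ∃ g ∈ Hc, toM2 g = (⟨mk' 1 0 (-1) 0 1, mk' 0 1 0 1 1, mk' 0 1 0 1 1, mk' 1 0 1 0 1⟩ : M2) := by
    obtain ⟨g, hg, hq⟩ := r8
    exact ⟨S' * g, mul_mem hSmem hg, by rw [toM2_mul, hq]; decide⟩
  have r16 : ∃ g ∈ Hc, toM2 g = (⟨mk' 0 0 0 0 0, mk' 0 (-1) 0 0 0, mk' 0 0 0 (-1) 0, mk' 0 0 0 0 0⟩ : M2) := by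
    obtain ⟨g, hg, hq⟩ := r8
    exact ⟨U' * g, mul_mem hUmem hg, by rw [toM2_mul, hq]; decide⟩
  have r17 : ∃ g ∈ Hc, toM2 g = (⟨mk' 1 0 1 0 1, mk' 0 1 0 1 1, mk' 0 1 0 1 1, mk' 1 0 (-1) 0 1⟩ : M2) := by
    obtain ⟨g, hg, hq⟩ := r9
    exact ⟨S' * g, mul_mem hSmem hg, by rw [toM2_mul, hq]; decide⟩
  have r18 : ∃ g ∈ Hc, toM2 g = (⟨mk' (-1) 0 (-1) 0 1, mk' 0 (-1) 0 1 1, mk' 0 1 0 (-1) 1, mk' (-1) 0 1 0 1⟩ : M2) := by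
    obtain ⟨g, hg, hq⟩ := r9
    exact ⟨U' * g, mul_mem hUmem hg, by rw [toM2_mul, hq]; decide⟩
  have r19 : ∃ g ∈ Hc, toM2 g = (⟨mk' (-1) 0 1 0 1, mk' 0 1 0 (-1) 1, mk' 0 (-1) 0 1 1, mk' (-1) 0 (-1) 0 1⟩ : M2) := by
    obtain ⟨g, hg, hq⟩ := r10
    exact ⟨U' * g, mul_mem hUmem hg, by rw [toM2_mul, hq]; decide⟩
  have r20 : ∃ g ∈ Hc, toM2 g = (⟨mk' 1 0 1 0 1, mk' 0 1 0 (-1) 1, mk' 0 (-1) 0 1 1, mk' 1 0 (-1) 0 1⟩ : M2) := by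
    obtain ⟨g, hg, hq⟩ := r11
    exact ⟨S' * g, mul_mem hSmem hg, by rw [toM2_mul, hq]; decide⟩
  have r21 : ∃ g ∈ Hc, toM2 g = (⟨mk' 0 0 0 0 0, mk' 0 0 0 1 0, mk' 0 1 0 0 0, mk' 0 0 0 0 0⟩ : M2) := by
    obtain ⟨g, hg, hq⟩ := r11
    exact ⟨U' * g, mul_mem hUmem hg, by rw [toM2_mul, hq]; decide⟩
  have r22 : ∃ g ∈ Hc, toM2 g = (⟨mk' (-1) 0 1 0 1, mk' 0 (-1) 0 1 1, mk' 0 1 0 (-1) 1, mk' (-1) 0 (-1) 0 1⟩ : M2) := by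
    obtain ⟨g, hg, hq⟩ := r12
    exact ⟨S' * g, mul_mem hSmem hg, by rw [toM2_mul, hq]; decide⟩
  have r23 : ∃ g ∈ Hc, toM2 g = (⟨mk' (-1) 0 (-1) 0 1, mk' 0 1 0 (-1) 1, mk' 0 (-1) 0 1 1, mk' (-1) 0 1 0 1⟩ : M2) := by
    obtain ⟨g, hg, hq⟩ := r12
    exact ⟨U' * g, mul_mem hUmem hg, by rw [toM2_mul, hq]; decide⟩
  have r24 : ∃ g ∈ Hc, toM2 g = (⟨mk' 0 1 0 1 1, mk' (-1) 0 (-1) 0 1, mk' 1 0 (-1) 0 1, mk' 0 (-1) 0 (-1) 1⟩ : M2) := by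
    obtain ⟨g, hg, hq⟩ := r14
    exact ⟨S' * g, mul_mem hSmem hg, by rw [toM2_mul, hq]; decide⟩
  have r25 : ∃ g ∈ Hc, toM2 g = (⟨mk' 0 (-1) 0 1 1, mk' 1 0 1 0 1, mk' (-1) 0 1 0 1, mk' 0 (-1) 0 1 1⟩ : M2) := by
    obtain ⟨g, hg, hq⟩ := r14
    exact ⟨U' * g, mul_mem hUmem hg, by rw [toM2_mul, hq]; decide⟩
  have r26 : ∃ g ∈ Hc, toM2 g = (⟨mk' 0 0 0 0 0, mk' 0 0 (-1) 0 0, mk' 0 0 (-1) 0 0, mk' 0 0 0 0 0⟩ : M2) := by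
    obtain ⟨g, hg, hq⟩ := r15
    exact ⟨S' * g, mul_mem hSmem hg, by rw [toM2_mul, hq]; decide⟩
  have r27 : ∃ g ∈ Hc, toM2 g = (⟨mk' 0 1 0 1 1, mk' 1 0 1 0 1, mk' (-1) 0 1 0 1, mk' 0 (-1) 0 (-1) 1⟩ : M2) := by
    obtain ⟨g, hg, hq⟩ := r15
    exact ⟨U' * g, mul_mem hUmem hg, by rw [toM2_mul, hq]; decide⟩
  have r28 : ∃ g ∈ Hc, toM2 g = (⟨mk' 0 0 0 (-1) 0, mk' 0 0 0 0 0, mk' 0 0 0 0 0, mk' 0 1 0 0 0⟩ : M2) := by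
    obtain ⟨g, hg, hq⟩ := r16
    exact ⟨U' * g, mul_mem hUmem hg, by rw [toM2_mul, hq]; decide⟩
  have r29 : ∃ g ∈ Hc, toM2 g = (⟨mk' 0 (-1) 0 (-1) 1, mk' (-1) 0 (-1) 0 1, mk' 1 0 (-1) 0 1, mk' 0 1 0 1 1⟩ : M2) := by
    obtain ⟨g, hg, hq⟩ := r17
    exact ⟨S' * g, mul_mem hSmem hg, by rw [toM2_mul, hq]; decide⟩
  have r30 : ∃ g ∈ Hc, toM2 g = (⟨mk' 0 1 0 1 1, mk' 1 0 (-1) 0 1, mk' (-1) 0 (-1) 0 1, mk' 0 (-1) 0 (-1) 1⟩ : M2) := by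
    obtain ⟨g, hg, hq⟩ := r17
    exact ⟨U' * g, mul_mem hUmem hg, by rw [toM2_mul, hq]; decide⟩
  have r31 : ∃ g ∈ Hc, toM2 g = (⟨mk' 0 1 0 (-1) 1, mk' (-1) 0 1 0 1, mk' 1 0 1 0 1, mk' 0 1 0 (-1) 1⟩ : M2) := by
    obtain ⟨g, hg, hq⟩ := r18
    exact ⟨U' * g, mul_mem hUmem hg, by rw [toM2_mul, hq]; decide⟩
  have r32 : ∃ g ∈ Hc, toM2 g = (⟨mk' 0 (-1) 0 (-1) 1, mk' 1 0 (-1) 0 1, mk' (-1) 0 (-1) 0 1, mk' 0 1 0 1 1⟩ : M2) := by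
    obtain ⟨g, hg, hq⟩ := r21
    exact ⟨S' * g, mul_mem hSmem hg, by rw [toM2_mul, hq]; decide⟩
  have r33 : ∃ g ∈ Hc, toM2 g = (⟨mk' 0 1 0 0 0, mk' 0 0 0 0 0, mk' 0 0 0 0 0, mk' 0 0 0 (-1) 0⟩ : M2) := by
    obtain ⟨g, hg, hq⟩ := r21
    exact ⟨U' * g, mul_mem hUmem hg, by rw [toM2_mul, hq]; decide⟩
  have r34 : ∃ g ∈ Hc, toM2 g = (⟨mk' 0 (-1) 0 (-1) 1, mk' 1 0 1 0 1, mk' (-1) 0 1 0 1, mk' 0 1 0 1 1⟩ : M2) := by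
    obtain ⟨g, hg, hq⟩ := r22
    exact ⟨S' * g, mul_mem hSmem hg, by rw [toM2_mul, hq]; decide⟩
  have r35 : ∃ g ∈ Hc, toM2 g = (⟨mk' 0 (-1) 0 1 1, mk' (-1) 0 1 0 1, mk' 1 0 1 0 1, mk' 0 (-1) 0 1 1⟩ : M2) := by
    obtain ⟨g, hg, hq⟩ := r23
    exact ⟨U' * g, mul_mem hUmem hg, by rw [toM2_mul, hq]; decide⟩
  have r36 : ∃ g ∈ Hc, toM2 g = (⟨mk' (-1) 0 (-1) 0 1, mk' 0 1 0 1 1, mk' 0 1 0 1 1, mk' (-1) 0 1 0 1⟩ : M2) := by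
    obtain ⟨g, hg, hq⟩ := r24
    exact ⟨S' * g, mul_mem hSmem hg, by rw [toM2_mul, hq]; decide⟩
  have r37 : ∃ g ∈ Hc, toM2 g = (⟨mk' 1 0 (-1) 0 1, mk' 0 (-1) 0 (-1) 1, mk' 0 (-1) 0 (-1) 1, mk' 1 0 1 0 1⟩ : M2) := by
    obtain ⟨g, hg, hq⟩ := r24
    exact ⟨U' * g, mul_mem hUmem hg, by rw [toM2_mul, hq]; decide⟩
  have r38 : ∃ g ∈ Hc, toM2 g = (⟨mk' (-1) 0 1 0 1, mk' 0 1 0 1 1, mk' 0 1 0 1 1, mk' (-1) 0 (-1) 0 1⟩ : M2) := by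
    obtain ⟨g, hg, hq⟩ := r26
    exact ⟨S' * g, mul_mem hSmem hg, by rw [toM2_mul, hq]; decide⟩
  have r39 : ∃ g ∈ Hc, toM2 g = (⟨mk' 0 0 (-1) 0 0, mk' 0 0 0 0 0, mk' 0 0 0 0 0, mk' 0 0 1 0 0⟩ : M2) := by
    obtain ⟨g, hg, hq⟩ := r26
    exact ⟨U' * g, mul_mem hUmem hg, by rw [toM2_mul, hq]; decide⟩
  have r40 : ∃ g ∈ Hc, toM2 g = (⟨mk' (-1) 0 1 0 1, mk' 0 (-1) 0 (-1) 1, mk' 0 (-1) 0 (-1) 1, mk' (-1) 0 (-1) 0 1⟩ : M2) := by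
    obtain ⟨g, hg, hq⟩ := r27
    exact ⟨U' * g, mul_mem hUmem hg, by rw [toM2_mul, hq]; decide⟩
  have r41 : ∃ g ∈ Hc, toM2 g = (⟨mk' (-1) 0 (-1) 0 1, mk' 0 (-1) 0 (-1) 1, mk' 0 (-1) 0 (-1) 1, mk' (-1) 0 1 0 1⟩ : M2) := by
    obtain ⟨g, hg, hq⟩ := r30
    exact ⟨U' * g, mul_mem hUmem hg, by rw [toM2_mul, hq]; decide⟩
  have r42 : ∃ g ∈ Hc, toM2 g = (⟨mk' 0 0 1 0 0, mk' 0 0 0 0 0, mk' 0 0 0 0 0, mk' 0 0 (-1) 0 0⟩ : M2) := by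
    obtain ⟨g, hg, hq⟩ := r32
    exact ⟨S' * g, mul_mem hSmem hg, by rw [toM2_mul, hq]; decide⟩
  have r43 : ∃ g ∈ Hc, toM2 g = (⟨mk' 0 0 0 0 0, mk' 0 0 0 (-1) 0, mk' 0 (-1) 0 0 0, mk' 0 0 0 0 0⟩ : M2) := by
    obtain ⟨g, hg, hq⟩ := r33
    exact ⟨U' * g, mul_mem hUmem hg, by rw [toM2_mul, hq]; decide⟩
  have r44 : ∃ g ∈ Hc, toM2 g = (⟨mk' 1 0 1 0 1, mk' 0 (-1) 0 (-1) 1, mk' 0 (-1) 0 (-1) 1, mk' 1 0 (-1) 0 1⟩ : M2) := by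
    obtain ⟨g, hg, hq⟩ := r34
    exact ⟨S' * g, mul_mem hSmem hg, by rw [toM2_mul, hq]; decide⟩
  have r45 : ∃ g ∈ Hc, toM2 g = (⟨mk' 0 1 0 1 1, mk' (-1) 0 1 0 1, mk' 1 0 1 0 1, mk' 0 (-1) 0 (-1) 1⟩ : M2) := by
    obtain ⟨g, hg, hq⟩ := r36
    exact ⟨U' * g, mul_mem hUmem hg, by rw [toM2_mul, hq]; decide⟩
  have r46 : ∃ g ∈ Hc, toM2 g = (⟨mk' 0 0 0 0 0, mk' 0 0 1 0 0, mk' 0 0 1 0 0, mk' 0 0 0 0 0⟩ : M2) := by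
    obtain ⟨g, hg, hq⟩ := r39
    exact ⟨U' * g, mul_mem hUmem hg, by rw [toM2_mul, hq]; decide⟩
  have r47 : ∃ g ∈ Hc, toM2 g = (⟨mk' 0 (-1) 0 (-1) 1, mk' (-1) 0 1 0 1, mk' 1 0 1 0 1, mk' 0 1 0 1 1⟩ : M2) := by
    obtain ⟨g, hg, hq⟩ := r41
    exact ⟨U' * g, mul_mem hUmem hg, by rw [toM2_mul, hq]; decide⟩
  intro x hx
  simp only [allQ, List.mem_cons, List.not_mem_nil, or_false] at hx
  rcases hx with rfl|rfl|rfl|rfl|rfl|rfl|rfl|rfl|rfl|rfl|rfl|rfl|rfl|rfl|rfl|rfl|rfl|rfl|rfl|rfl|rfl|rfl|rfl|rfl|rfl|rfl|rfl|rfl|rfl|rfl|rfl|rfl|rfl|rfl|rfl|rfl|rfl|rfl|rfl|rfl|rfl|rfl|rfl|rfl|rfl|rfl|rfl|rfl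
  · exact r0
  · exact r1
  · exact r2
  · exact r3
  · exact r4
  · exact r5
  · exact r6
  · exact r7
  · exact r8
  · exact r9
  · exact r10
  · exact r11
  · exact r12
  · exact r13
  · exact r14
  · exact r15
  · exact r16
  · exact r17
  · exact r18
  · exact r19
  · exact r20
  · exact r21
  · exact r22
  · exact r23
  · exact r24
  · exact r25
  · exact r26
  · exact r27
  · exact r28
  · exact r29
  · exact r30
  · exact r31
  · exact r32
  · exact r33
  · exact r34
  · exact r35
  · exact r36
  · exact r37
  · exact r38
  · exact r39
  · exact r40
  · exact r41
  · exact r42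
  · exact r43
  · exact r44
  · exact r45
  · exact r46
  · exact r47

lemma card_Hc : Nat.card Hc = 48 := by
  have hbij : Function.Bijective (fun g : Hc => (⟨toM2 g.1, (mem_LF _).mpr (toM2_mem_allQ g.2)⟩ : {x // x ∈ LF})) := by
    constructor
    · intro x y h
      exact Subtype.ext (toM2_inj (congrArg Subtype.val h))
    · rintro ⟨x, hx⟩
      obtain ⟨g, hg, hgx⟩ := allQ_reachable x ((mem_LF _).mp hx)
      exact ⟨⟨g, hg⟩, Subtype.ext hgx⟩
  rw [Nat.card_eq_of_bijective _ hbij, Nat.card_eq_finsetCard, LF_card]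

lemma rt2_ne : rt2 ≠ 0 := by
  intro h
  have := rt2_sq
  rw [h] at this
  norm_num at this

noncomputable def Φ : G8 →* Matrix.SpecialLinearGroup (Fin 2) ℂ :=
  Matrix.SpecialLinearGroup.map φR

lemma Φ_inj : Function.Injective Φ := by
  intro x y h
  apply Subtype.ext
  ext i j
  apply φ_inj
  have := congrArg (fun g : Matrix.SpecialLinearGroup (Fin 2) ℂ => g.1 i j) h
  exact this

lemma φ_S00 : φ (mk' 0 (-1) 0 1 1) = -(1/rt2) * 1 := by
  rw [φ_mk']
  unfold v
  rw [eps_cube, eps_sq, eps_eq]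
  push_cast
  field_simp [rt2_ne]
  linear_combination (-2)*rt2_sq

lemma φ_S01 : φ (mk' (-1) 0 (-1) 0 1) = -(1/rt2) * eps := by
  rw [φ_mk']
  unfold v
  rw [eps_cube, eps_sq, eps_eq]
  push_cast
  field_simp [rt2_ne]
  ring

lemma φ_S10 : φ (mk' 1 0 (-1) 0 1) = -(1/rt2) * eps^3 := by
  rw [φ_mk']
  unfold v
  rw [eps_cube, eps_sq, eps_eq]
  push_cast
  field_simp [rt2_ne]
  ring

noncomputable def SS : Matrix.SpecialLinearGroup (Fin 2) ℂ :=
  ⟨!![-(1/rt2) * 1, -(1/rt2) * eps; -(1/rt2) * eps^3, -(1/rt2) * 1], by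
    rw [Matrix.det_fin_two_of]
    have h4 := eps_pow4
    have h2 := rt2_sq
    field_simp [rt2_ne]
    linear_combination -h4 - h2⟩

noncomputable def UU : Matrix.SpecialLinearGroup (Fin 2) ℂ :=
  ⟨!![0, 1; -1, 0], by simp [Matrix.det_fin_two_of]⟩

lemma ΦS : Φ S' = SS := by
  apply Subtype.ext
  ext i j
  fin_cases i <;> fin_cases j <;>
    simp only [Φ, Matrix.SpecialLinearGroup.map, RingHom.mapMatrix_apply, MonoidHom.coe_mk,
      OneHom.coe_mk, Matrix.map_apply, S', SS, Matrix.cons_val', Matrix.cons_val_zero,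
      Matrix.cons_val_one, Matrix.head_cons, Matrix.head_fin_const, Matrix.empty_val',
      Matrix.cons_val_fin_one]
  · exact φ_S00
  · exact φ_S01
  · exact φ_S10
  · exact φ_S00

lemma ΦU : Φ U' = UU := by
  apply Subtype.ext
  ext i j
  fin_cases i <;> fin_cases j
  · show φ (0 : R8) = (0 : ℂ)
    exact φ_zero
  · show φ (1 : R8) = (1 : ℂ)
    exact φ_one
  · show φ (-1 : R8) = (-1 : ℂ)
    rw [show (-1 : R8) = -(1:R8) from rfl, φ_neg, φ_one]
  · show φ (0 : R8) = (0 : ℂ)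
    exact φ_zero

lemma final : Nat.card (Subgroup.closure {SS, UU} :
    Subgroup (Matrix.SpecialLinearGroup (Fin 2) ℂ)) = 48 := by
  have himg : ({SS, UU} : Set (Matrix.SpecialLinearGroup (Fin 2) ℂ)) = ⇑Φ '' {S', U'} := by
    rw [Set.image_insert_eq, Set.image_singleton, ΦS, ΦU]
  rw [himg, ← MonoidHom.map_closure]
  rw [← Nat.card_congr (Subgroup.equivMapOfInjective (Subgroup.closure {S', U'}) Φ Φ_inj).toEquiv]
  exact card_Hc

/-- With `ε = exp(2πi/8)`, the subgroup of `SL(2,ℂ)` generated by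
`S = −(1/√2)[[1, ε],[ε³, 1]]` and `U = [[0,1],[−1,0]]` — the binary octahedral
group — has 48 elements. -/
theorem card_binaryOctahedral :
    letI ε : ℂ := Complex.exp (2 * Real.pi * Complex.I / 8)
    letI s : ℂ := (Real.sqrt 2 : ℝ)
    letI S : Matrix.SpecialLinearGroup (Fin 2) ℂ :=
      ⟨!![-(1/s) * 1, -(1/s) * ε; -(1/s) * ε^3, -(1/s) * 1], by
        dsimp +zetaDelta only
        set ε : ℂ := Complex.exp (2 * Real.pi * Complex.I / 8) with hεdef
        set s : ℂ := ((Real.sqrt 2 : ℝ) : ℂ) with hsdef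
        have hε : ε ≠ 0 := Complex.exp_ne_zero _
        have h4 : ε ^ 4 = -1 := by
          rw [hεdef, ← Complex.exp_nat_mul]
          rw [show (4 : ℕ) * (2 * (Real.pi : ℂ) * Complex.I / 8) = Real.pi * Complex.I by
            push_cast; ring]
          exact Complex.exp_pi_mul_I
        have hs : s ^ 2 = 2 := by
          rw [hsdef]; norm_cast; exact Real.sq_sqrt (by norm_num)
        have hs0 : s ≠ 0 := by intro h; rw [h] at hs; norm_num at hs
        rw [Matrix.det_fin_two_of]
        field_simp
        linear_combination -h4 - hs⟩
    letI U : Matrix.SpecialLinearGroup (Fin 2) ℂ :=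
      ⟨!![0, 1; -1, 0], by simp [Matrix.det_fin_two_of]⟩
    Nat.card (Subgroup.closure {S, U} : Subgroup (Matrix.SpecialLinearGroup (Fin 2) ℂ)) = 48 := by
  exact final
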